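/- arXiv:2210.10989 — 2 statements merged into one kernel-verified Lean document; each statement's English description precedes it below -/
import Mathlib

section
/- Define h_m = [y^m] (y²/(−log(1−y²)))^{(m+1)/2} (square-root branch with constant term 1). Then h_m = [v^m] e^v · (v²/(−log(2−e^v) − v))^{(m+1)/2}, for every m ≥ 0. -/
/-! Write `eᵛ − 1 = v·u`. Since `−log(1−y) − log(1+y) = −log(1−y²)` and `log(1 + (eᵛ−1)) = v`,
substituting `y = eᵛ − 1` turns `y²/(−log(1−y²))` into `u²·v²/(−log(2−eᵛ)−v)`; comparing square
roots with constant term 1, `H1(eᵛ−1) = u^(m+1)·H2`. As `eᵛ = (eᵛ−1)'`, the claim becomes the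
Lagrange-type identity `[v^m] f'·u^(−m−1)·H(f) = [y^m] H` for `f = v·u`, which holds because
`[v^r] f'·u^(−r−1)` is the residue of `f'/f^(r+1)`, and for `r > 0` that is a derivative. -/

open PowerSeries

/-- Composition `g ∘ f` of formal power series, for `f` with zero constant term. -/
noncomputable def psComp {R : Type*} [CommSemiring R] (g f : R⟦X⟧) : R⟦X⟧ :=
  PowerSeries.mk fun n => ∑ k ∈ Finset.range (n + 1), coeff k g * coeff n (f ^ k)

/-- `y²/(−log(1−y²)) = (∑_{k≥0} y^{2k}/(k+1))⁻¹`, a power series with constant term 1. -/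
noncomputable def ratioQ : ℚ⟦X⟧ :=
  (PowerSeries.mk fun j => if Even j then (1 : ℚ) / (j / 2 + 1) else 0)⁻¹

/-- The series `−log(1−y) = ∑_{k≥1} y^k/k`. -/
noncomputable def negLogOneSub : ℚ⟦X⟧ :=
  PowerSeries.mk fun k => if k = 0 then 0 else 1 / (k : ℚ)

/-- The series `−log(2−eᵛ) − v` in `v` (note `2 − eᵛ = 1 − (eᵛ−1)`). -/
noncomputable def denomD : ℚ⟦X⟧ :=
  psComp negLogOneSub (PowerSeries.exp ℚ - 1) - X

namespace PowerSeries

open Finset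

variable {R : Type*} [CommRing R]

lemma coeff_pow_eq_zero_of_lt {f : R⟦X⟧} (hf : constantCoeff f = 0) {n k : ℕ} (h : n < k) :
    coeff n (f ^ k) = 0 := by
  obtain ⟨g, rfl⟩ := X_dvd_iff.2 hf
  rw [mul_pow, coeff_X_pow_mul', if_neg (by omega)]

lemma coeff_mul_subst_X_mul (P H u : R⟦X⟧) (m : ℕ) :
    coeff m (P * H.subst (X * u)) =
      ∑ k ∈ range (m + 1), coeff k H * coeff m (P * (X * u) ^ k) := by
  have hs : HasSubst (X * u) := HasSubst.of_constantCoeff_zero' (by simp)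
  have high : coeff m (P * ((X * u) ^ (m + 1) *
      (mk fun i ↦ coeff (i + (m + 1)) H).subst (X * u))) = 0 := by
    rw [mul_pow, mul_left_comm, mul_assoc, coeff_X_pow_mul', if_neg (by omega)]
  conv_lhs => rw [eq_X_pow_mul_shift_add_trunc (m + 1) H]
  rw [subst_add hs, subst_mul hs, subst_pow hs, subst_X hs, subst_coe hs,
    Polynomial.aeval_eq_sum_range' (natDegree_trunc_lt H m), mul_add, map_add, high, zero_add,
    mul_sum, map_sum]
  refine sum_congr rfl fun k hk => ?_
  rw [mul_smul_comm, coeff_smul, coeff_trunc, if_pos (mem_range.1 hk), smul_eq_mul]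

lemma derivative_X_mul (u : R⟦X⟧) : d⁄dX R (X * u) = u + X * d⁄dX R u := by
  rw [Derivation.leibniz, derivative_X, smul_eq_mul, smul_eq_mul, mul_one, add_comm]

lemma coeff_derivative_X_mul_mul_pow_succ [IsAddTorsionFree R] {u w : R⟦X⟧} (huw : u * w = 1)
    (r : ℕ) : coeff r (d⁄dX R (X * u) * w ^ (r + 1)) = if r = 0 then 1 else 0 := by
  rw [derivative_X_mul]
  cases r with
  | zero =>
    have h : (u + X * d⁄dX R u) * w ^ 1 = 1 + X * (d⁄dX R u * w) := by
      linear_combination huw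
    rw [h, map_add, coeff_zero_X_mul, add_zero, coeff_one, if_pos rfl]
  | succ s =>
    have hsplit : (u + X * d⁄dX R u) * w ^ (s + 2) =
        w ^ (s + 1) + X * (d⁄dX R u * w ^ (s + 2)) := by
      linear_combination w ^ (s + 1) * huw
    have hdw : d⁄dX R w = -(d⁄dX R u * w ^ 2) := by
      have := congrArg (d⁄dX R) huw
      rw [Derivation.leibniz, Derivation.map_one_eq_zero, smul_eq_mul, smul_eq_mul] at this
      linear_combination w * this - d⁄dX R w * huw
    have hderiv_pow : (s + 1) • (d⁄dX R u * w ^ (s + 2)) = -d⁄dX R (w ^ (s + 1)) := by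
      rw [derivative_pow, hdw, nsmul_eq_mul, Nat.add_sub_cancel]
      push_cast
      ring
    have hcoeff := congrArg (coeff s) hderiv_pow
    rw [map_nsmul, map_neg, coeff_derivative, ← Nat.cast_succ, ← nsmul_eq_mul'] at hcoeff
    rw [hsplit, map_add, coeff_succ_X_mul, if_neg s.succ_ne_zero,
      ← nsmul_eq_zero_iff_right s.succ_ne_zero, smul_add, hcoeff, add_neg_cancel]

lemma coeff_derivative_X_mul_mul_pow_mul_subst [IsAddTorsionFree R] {u w : R⟦X⟧}
    (huw : u * w = 1) (H : R⟦X⟧) (m : ℕ) :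
    coeff m (d⁄dX R (X * u) * w ^ (m + 1) * H.subst (X * u)) = coeff m H := by
  have monomial_term : ∀ k ∈ range (m + 1),
      coeff k H * coeff m (d⁄dX R (X * u) * w ^ (m + 1) * (X * u) ^ k) =
        if k = m then coeff k H else 0 := by
    intro k hk
    obtain ⟨r, rfl⟩ := Nat.exists_eq_add_of_le (Nat.lt_succ_iff.1 (mem_range.1 hk))
    have h : d⁄dX R (X * u) * w ^ (k + r + 1) * (X * u) ^ k =
        X ^ k * (d⁄dX R (X * u) * w ^ (r + 1)) := by
      have huwk : u ^ k * w ^ k = 1 := by rw [← mul_pow, huw, one_pow]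
      rw [show k + r + 1 = (r + 1) + k by omega, pow_add, mul_pow]
      linear_combination (X ^ k * d⁄dX R (X * u) * w ^ (r + 1)) * huwk
    rw [h, coeff_X_pow_mul', if_pos (by omega), Nat.add_sub_cancel_left,
      coeff_derivative_X_mul_mul_pow_succ huw]
    by_cases hr : r = 0 <;> simp [hr]
  rw [coeff_mul_subst_X_mul, sum_congr rfl monomial_term, sum_ite_eq' (range (m + 1)) m,
    if_pos (self_mem_range_succ m)]

lemma eq_of_sq_eq_sq_of_constantCoeff_eq [IsDomain R] [NeZero (2 : R)] {a b : R⟦X⟧}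
    (h : a ^ 2 = b ^ 2) (hab : constantCoeff a = constantCoeff b) (ha : constantCoeff a ≠ 0) :
    a = b := by
  refine (sq_eq_sq_iff_eq_or_eq_neg.1 h).resolve_right fun hneg => ha ?_
  have h2 : (2 : R) * constantCoeff a = 0 := by
    have := congrArg constantCoeff hneg
    rw [map_neg, ← hab] at this
    linear_combination this
  exact (mul_eq_zero.1 h2).resolve_left two_ne_zero

lemma constantCoeff_subst_X_mul (H u : R⟦X⟧) :
    constantCoeff (H.subst (X * u)) = constantCoeff H := by
  simpa using coeff_mul_subst_X_mul 1 H u 0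

section Log

variable {A : Type*} [CommRing A] [Algebra ℚ A]

lemma one_add_X_mul_mk_neg_one_pow :
    (1 + X) * (mk fun n ↦ algebraMap ℚ A ((-1 : ℚ) ^ n)) = 1 := by
  ext n
  cases n with
  | zero => simp
  | succ n => simp [add_mul, coeff_one, pow_succ]

theorem log_subst_exp_sub_one : (log A).subst (exp A - 1) = X := by
  have hs : HasSubst (exp A - 1) := HasSubst.exp_sub_one
  have : IsAddTorsionFree A := .of_module_rat A
  apply derivative.ext
  · have h := congrArg (subst (exp A - 1)) (one_add_X_mul_mk_neg_one_pow (A := A))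
    have h1 : (1 : A⟦X⟧).subst (exp A - 1) = 1 := by rw [← coe_substAlgHom hs, map_one]
    rw [subst_mul hs, subst_add hs, subst_X hs, h1, add_sub_cancel] at h
    rw [derivative_subst hs, deriv_log, map_sub, derivative_exp, derivative_one, sub_zero,
      derivative_X, mul_comm, h]
  · rw [constantCoeff_X]
    refine constantCoeff_subst_eq_zero ?_ _ constantCoeff_log
    rw [map_sub, map_one, ← constantCoeff_eq, constantCoeff_exp, sub_self]

end Log

end PowerSeries

open PowerSeries Finset

lemma psComp_eq_subst {R : Type*} [CommRing R] {f : R⟦X⟧} (hf : constantCoeff f = 0) (g : R⟦X⟧) :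
    psComp g f = g.subst f := by
  ext n
  rw [psComp, coeff_mk, coeff_subst' (HasSubst.of_constantCoeff_zero' hf)]
  refine (finsum_eq_sum_of_support_subset _ fun k hk => ?_).symm
  rw [coe_range, Set.mem_Iio]
  by_contra hkn
  exact hk (mul_eq_zero_of_right _ (coeff_pow_eq_zero_of_lt hf (by omega)))

lemma X_sq_mul_mk_even : X ^ 2 * mk (fun j => if Even j then (1 : ℚ) / (j / 2 + 1) else 0) =
    negLogOneSub - log ℚ := by
  ext n
  rcases n with _ | _ | k
  · simp [negLogOneSub]
  · simp [negLogOneSub, coeff_X_pow_mul']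
  rw [coeff_X_pow_mul', if_pos (by omega), show k + 1 + 1 - 2 = k by omega, coeff_mk, map_sub,
    negLogOneSub, coeff_mk, coeff_log]
  obtain ⟨j, rfl | rfl⟩ := Nat.even_or_odd' k
  · simp [Odd.neg_one_pow (⟨j + 1, by ring⟩ : Odd (2 * j + 1 + 1 + 1))]
    field_simp
    ring
  · simp [Even.neg_one_pow (⟨j + 2, by ring⟩ : Even (2 * j + 1 + 1 + 1 + 1))]

lemma ratioQ_mul_negLogOneSub_sub_log : ratioQ * (negLogOneSub - log ℚ) = X ^ 2 := by
  rw [← X_sq_mul_mk_even, ratioQ, mul_left_comm, PowerSeries.inv_mul_cancel _ (by simp), mul_one]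

lemma denomD_eq_subst : denomD = (negLogOneSub - log ℚ).subst (exp ℚ - 1) := by
  rw [denomD, psComp_eq_subst (by simp), subst_sub HasSubst.exp_sub_one,
    log_subst_exp_sub_one]

/-- `Q2 = v²/(−log(2−eᵛ)−v)` is characterized by `Q2·(−log(2−eᵛ)−v) = v²`, and the powers
`(m+1)/2` are the square roots with constant term 1. -/
theorem stmt13 (m : ℕ) (Q2 H1 H2 : ℚ⟦X⟧)
    (hQ2 : Q2 * denomD = X ^ 2)
    (hH1 : H1 ^ 2 = ratioQ ^ (m + 1)) (hH10 : constantCoeff H1 = 1)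
    (hH2 : H2 ^ 2 = Q2 ^ (m + 1)) (hH20 : constantCoeff H2 = 1) :
    coeff m H1 = coeff m (PowerSeries.exp ℚ * H2) := by
  obtain ⟨u, hu⟩ : X ∣ exp ℚ - 1 := X_dvd_iff.2 (by simp)
  have hu0 : constantCoeff u = 1 := by simpa using (congrArg (coeff 1) hu).symm
  have huw : u * u⁻¹ = 1 := PowerSeries.mul_inv_cancel u (by simp [hu0])
  have hs : HasSubst (X * u) := HasSubst.of_constantCoeff_zero' (by simp)
  have hD : denomD = (negLogOneSub - log ℚ).subst (X * u) := hu ▸ denomD_eq_subst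
  have hQ : ratioQ.subst (X * u) = u ^ 2 * Q2 := by
    have hD0 : denomD ≠ 0 := fun h => by simpa [h] using congrArg (coeff 2) hQ2
    apply mul_right_cancel₀ hD0
    rw [hD, ← subst_mul hs, ratioQ_mul_negLogOneSub_sub_log, subst_pow hs, subst_X hs, ← hD]
    linear_combination -u ^ 2 * hQ2
  have hH : H1.subst (X * u) = u ^ (m + 1) * H2 := by
    apply eq_of_sq_eq_sq_of_constantCoeff_eq
    · rw [← subst_pow hs, hH1, subst_pow hs, hQ, mul_pow, mul_pow, hH2]
      ring
    · simp [constantCoeff_subst_X_mul, hH10, hH20, hu0]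
    · simp [constantCoeff_subst_X_mul, hH10]
  have hexp : exp ℚ = d⁄dX ℚ (X * u) := by
    rw [← hu, map_sub, derivative_exp, derivative_one, sub_zero]
  calc coeff m H1 = coeff m (d⁄dX ℚ (X * u) * u⁻¹ ^ (m + 1) * H1.subst (X * u)) :=
        (coeff_derivative_X_mul_mul_pow_mul_subst huw H1 m).symm
    _ = coeff m (exp ℚ * H2) := by
      rw [hH, hexp, ← mul_assoc, mul_assoc _ _ (u ^ (m + 1)), ← mul_pow, mul_comm u⁻¹, huw,
        one_pow, mul_one]
end

section
/- Define b_m = [t^m] ((1 − e^{−t})/t)^{1/2} (square-root branch with constant term 1) and h_m = [y^m] (y²/(−log(1−y²)))^{(m+1)/2} (constant term 1). Then h_{2m} = (2m+1)·b_m for every m ≥ 0. -/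
/-!
Put `u = 1 − e^{−t}`, so that `t = −log(1−u) = u P(u)` with `P = ∑ uᵏ/(k+1)`, and `Q = 1/P`.
Then `(1−e^{−t})/t = Q(u(t))` and `y²/(−log(1−y²)) = Q(y²)`.

The square root `H` is even, since `H(−y)` has the same square and constant term; so
`H(y) = G(y²)` with `G² = Q^{2m+1}`, and `b = S(u(t))` with `S = G P^m`, `S² = Q`.
Lagrange inversion gives `[t^m] S(u(t)) = [u^m] S Q^{m+1}/(1−u) = [u^m] G Q/(1−u)`.
On the other hand `u Q' = Q − Q²/(1−u)`, so differentiating `G² = Q^{2m+1}` gives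
`2 u G' = (2m+1) G (1 − Q/(1−u))`, whose `u^m`-coefficient reads
`[u^m] G = (2m+1) [u^m] G Q/(1−u)`.
-/

open PowerSeries

/-- `(1−e^{−t})/t = ∑_{k≥0} (−1)^k t^k/(k+1)!`, with constant term 1. -/
noncomputable def ratioB : ℚ⟦X⟧ :=
  PowerSeries.mk fun k => (-1) ^ k / ((k + 1).factorial : ℚ)

namespace PowerSeries

variable {R : Type*} [CommRing R]

theorem eq_of_sq_eq_sq_of_constantCoeff_eq_one [NoZeroDivisors R] [NeZero (2 : R)]
    {f g : R⟦X⟧} (h : f ^ 2 = g ^ 2) (hf : constantCoeff f = 1) (hg : constantCoeff g = 1) :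
    f = g := by
  refine (sq_eq_sq_iff_eq_or_eq_neg.mp h).resolve_right fun hfg => two_ne_zero (α := R) ?_
  have := congrArg constantCoeff hfg
  rw [map_neg, hf, hg] at this
  linear_combination this

theorem expand_injective (p : ℕ) (hp : p ≠ 0) :
    Function.Injective (expand p hp : R⟦X⟧ → R⟦X⟧) := fun f g h => by
  ext n
  simpa using congrArg (coeff (p * n)) h

theorem rescale_neg_one_expand_two (f : R⟦X⟧) :
    rescale (-1) (expand 2 two_ne_zero f) = expand 2 two_ne_zero f := by
  ext n
  rw [coeff_rescale, coeff_expand]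
  split_ifs with h
  · rw [(even_iff_two_dvd.mpr h).neg_one_pow, one_mul]
  · rw [mul_zero]

theorem exists_expand_two_eq_of_rescale_neg_one_eq [NoZeroDivisors R] [NeZero (2 : R)]
    {f : R⟦X⟧} (h : rescale (-1) f = f) : ∃ g, expand 2 two_ne_zero g = f := by
  refine ⟨mk fun k => coeff (2 * k) f, ?_⟩
  ext n
  rw [coeff_expand]
  split_ifs with hn
  · rw [coeff_mk, Nat.mul_div_cancel' hn]
  · have hodd : (-1 : R) ^ n = -1 := (Nat.odd_iff.mpr (by omega)).neg_one_pow
    have := congrArg (coeff n) h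
    rw [coeff_rescale, hodd] at this
    have h2 : (2 : R) * coeff n f = 0 := by linear_combination -this
    exact ((mul_eq_zero.mp h2).resolve_left two_ne_zero).symm

theorem coeff_X_mul_derivative (f : R⟦X⟧) (n : ℕ) :
    coeff n (X * d⁄dX R f) = n * coeff n f := by
  cases n with
  | zero => simp
  | succ n => rw [coeff_succ_X_mul, coeff_derivative, mul_comm]; push_cast; rfl

end PowerSeries

namespace Stmt15

/-- `−log(1−u)/u = ∑ uᵏ/(k+1)`. -/
noncomputable def logQuot : ℚ⟦X⟧ := mk fun k => (1 : ℚ) / (k + 1)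

noncomputable def logQuotInv : ℚ⟦X⟧ := logQuot⁻¹

/-- `1 − e^{−t}`, whose compositional inverse is `u ↦ u · logQuot u`. -/
noncomputable def oneSubExpNeg : ℚ⟦X⟧ := X * ratioB

theorem constantCoeff_logQuot : constantCoeff logQuot = 1 := by
  simp [logQuot]

theorem constantCoeff_logQuotInv : constantCoeff logQuotInv = 1 := by
  simp [logQuotInv, constantCoeff_logQuot]

theorem logQuotInv_mul_logQuot : logQuotInv * logQuot = 1 :=
  PowerSeries.inv_mul_cancel _ (by simp [constantCoeff_logQuot])

theorem derivative_X_mul_logQuot : d⁄dX ℚ (X * logQuot) = mk 1 := by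
  ext n
  rw [coeff_derivative, coeff_succ_X_mul]
  simp only [logQuot, coeff_mk, Pi.one_apply]
  field_simp

theorem X_mul_derivative_logQuotInv :
    X * d⁄dX ℚ logQuotInv = logQuotInv - logQuotInv ^ 2 * mk 1 := by
  have hQ : d⁄dX ℚ logQuotInv = -logQuotInv ^ 2 * d⁄dX ℚ logQuot := derivative_inv' _
  have hP := derivative_X_mul_logQuot
  rw [Derivation.leibniz, derivative_X, smul_eq_mul, smul_eq_mul, mul_one] at hP
  linear_combination X * hQ - logQuotInv ^ 2 * hP + logQuotInv * logQuotInv_mul_logQuot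

theorem coeff_logQuotInv_pow_mul_mk_one (m j : ℕ) :
    ((m : ℚ) + 1) * coeff j (logQuotInv ^ (m + 2) * mk 1)
      = ((m : ℚ) + 1 - j) * coeff j (logQuotInv ^ (m + 1)) := by
  have h : X * d⁄dX ℚ (logQuotInv ^ (m + 1))
      = ((m : ℚ⟦X⟧) + 1) * (logQuotInv ^ (m + 1) - logQuotInv ^ (m + 2) * mk 1) := by
    rw [derivative_pow]
    push_cast
    linear_combination ((m : ℚ⟦X⟧) + 1) * logQuotInv ^ m * X_mul_derivative_logQuotInv
  have hc := congrArg (coeff j) h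
  rw [coeff_X_mul_derivative, ← map_natCast (C (R := ℚ)), ← map_one (C (R := ℚ)), ← map_add,
    coeff_C_mul, map_sub] at hc
  linear_combination hc

theorem derivative_oneSubExpNeg : d⁄dX ℚ oneSubExpNeg = 1 - oneSubExpNeg := by
  ext n
  rw [coeff_derivative, map_sub, oneSubExpNeg, coeff_succ_X_mul]
  cases n with
  | zero => simp [ratioB]
  | succ n =>
    simp only [ratioB, coeff_mk, coeff_succ_X_mul, coeff_one, n.succ_ne_zero, if_false,
      Nat.factorial_succ (n + 1)]
    push_cast
    field_simp
    ring

theorem coeff_succ_oneSubExpNeg_pow_succ (m n : ℕ) :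
    ((m : ℚ) + 1) * coeff (m + 1) (oneSubExpNeg ^ (n + 1))
      = ((n : ℚ) + 1) * (coeff m (oneSubExpNeg ^ n) - coeff m (oneSubExpNeg ^ (n + 1))) := by
  have h : d⁄dX ℚ (oneSubExpNeg ^ (n + 1))
      = C ((n : ℚ) + 1) * (oneSubExpNeg ^ n - oneSubExpNeg ^ (n + 1)) := by
    rw [derivative_pow, derivative_oneSubExpNeg, map_add, map_natCast, map_one]
    simp only [Nat.add_sub_cancel]
    push_cast
    ring
  have hc := congrArg (coeff m) h
  rw [coeff_derivative, coeff_C_mul, map_sub] at hc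
  linear_combination hc

/-- Lagrange inversion: `u ↦ −log(1−u)` is the compositional inverse of `oneSubExpNeg`, and
`mk 1 = 1/(1−u)` is its derivative. -/
theorem coeff_oneSubExpNeg_pow (m n : ℕ) :
    coeff m (oneSubExpNeg ^ n) = coeff m (X ^ n * (logQuotInv ^ (m + 1) * mk 1)) := by
  induction m generalizing n with
  | zero =>
    cases n with
    | zero => simp [constantCoeff_logQuotInv]
    | succ n => simp [oneSubExpNeg]
  | succ m ih =>
    have hm : (m : ℚ) + 1 ≠ 0 := by positivity
    refine mul_left_cancel₀ hm ?_
    cases n with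
    | zero =>
      have h := coeff_logQuotInv_pow_mul_mk_one m (m + 1)
      push_cast at h
      simpa [coeff_one] using h.symm
    | succ n =>
      have hshift : coeff m (X ^ n * (logQuotInv ^ (m + 1) * mk 1))
          - coeff m (X ^ (n + 1) * (logQuotInv ^ (m + 1) * mk 1))
          = coeff m (X ^ n * logQuotInv ^ (m + 1)) := by
        rw [← map_sub]
        congr 1
        linear_combination X ^ n * logQuotInv ^ (m + 1) * mk_one_mul_one_sub_eq_one ℚ
      rw [coeff_succ_oneSubExpNeg_pow_succ, ih, ih, hshift, coeff_X_pow_mul', coeff_X_pow_mul']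
      split_ifs with hnm hnm' hnm'
      · rw [show m + 1 - (n + 1) = m - n by omega, coeff_logQuotInv_pow_mul_mk_one,
          Nat.cast_sub hnm]
        ring
      · omega
      · omega
      · simp

theorem hasSubst_oneSubExpNeg : HasSubst oneSubExpNeg :=
  HasSubst.of_constantCoeff_zero' (by simp [oneSubExpNeg])

theorem coeff_subst_oneSubExpNeg (f : ℚ⟦X⟧) (m : ℕ) :
    coeff m (f.subst oneSubExpNeg) = coeff m (f * (logQuotInv ^ (m + 1) * mk 1)) := by
  have hsupp : (Function.support fun d => coeff d f • coeff m (oneSubExpNeg ^ d))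
      ⊆ Finset.range (m + 1) := by
    intro d hd
    by_contra hdm
    simp [coeff_oneSubExpNeg_pow, coeff_X_pow_mul', show ¬ d ≤ m by simpa using hdm] at hd
  rw [coeff_subst' hasSubst_oneSubExpNeg, finsum_eq_sum_of_support_subset _ hsupp, coeff_mul,
    Finset.Nat.sum_antidiagonal_eq_sum_range_succ_mk]
  refine Finset.sum_congr rfl fun d hd => ?_
  rw [coeff_oneSubExpNeg_pow, coeff_X_pow_mul', if_pos (by simpa [Nat.lt_succ_iff] using hd),
    smul_eq_mul]

theorem constantCoeff_subst_oneSubExpNeg (f : ℚ⟦X⟧) :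
    constantCoeff (f.subst oneSubExpNeg) = constantCoeff f := by
  simpa [constantCoeff_logQuotInv] using coeff_subst_oneSubExpNeg f 0

theorem subst_oneSubExpNeg_logQuotInv : logQuotInv.subst oneSubExpNeg = ratioB := by
  ext m
  rw [coeff_subst_oneSubExpNeg, ← coeff_succ_X_mul, ← coeff_succ_X_mul m ratioB, ← oneSubExpNeg,
    ← pow_one oneSubExpNeg, coeff_oneSubExpNeg_pow]
  ring_nf

theorem ratioQ_eq_expand_logQuotInv : ratioQ = expand 2 two_ne_zero logQuotInv := by
  have hP : (mk fun j => if Even j then (1 : ℚ) / (j / 2 + 1) else 0)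
      = expand 2 two_ne_zero logQuot := by
    ext j
    simp only [coeff_mk, coeff_expand, even_iff_two_dvd]
    split_ifs with hj
    · obtain ⟨k, rfl⟩ := hj
      simp [logQuot]
    · rfl
  rw [ratioQ, hP, eq_comm, eq_inv_iff_mul_eq_one (by simp [constantCoeff_logQuot]), ← map_mul,
    logQuotInv_mul_logQuot, map_one]

theorem coeff_eq_of_sq_eq_logQuotInv_pow {g : ℚ⟦X⟧} {m : ℕ}
    (hg : g ^ 2 = logQuotInv ^ (2 * m + 1)) :
    coeff m g = (2 * m + 1) * coeff m (g * (logQuotInv * mk 1)) := by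
  have hg0 : g ≠ 0 := by
    rintro rfl
    simpa [constantCoeff_logQuotInv] using congrArg constantCoeff hg
  have hd := congrArg (d⁄dX ℚ) hg
  simp only [derivative_pow, Nat.add_sub_cancel] at hd
  have hode : C 2 * (X * d⁄dX ℚ g) = C (2 * (m : ℚ) + 1) * (g - g * (logQuotInv * mk 1)) := by
    refine mul_left_cancel₀ hg0 ?_
    simp only [map_add, map_mul, map_natCast, map_one, map_ofNat]
    push_cast at hd
    linear_combination X * hd + (2 * (m : ℚ⟦X⟧) + 1) * logQuotInv ^ (2 * m)
      * X_mul_derivative_logQuotInv - (2 * (m : ℚ⟦X⟧) + 1) * (1 - logQuotInv * mk 1) * hg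
  have hc := congrArg (coeff m) hode
  rw [coeff_C_mul, coeff_C_mul, coeff_X_mul_derivative, map_sub] at hc
  linear_combination -hc

end Stmt15

open Stmt15 in
/-- With `b_m = [t^m] ((1−e^{−t})/t)^{1/2}` and
`h_m = [y^m] (y²/(−log(1−y²)))^((m+1)/2)` (both square roots having constant
term 1), we have `h_{2m} = (2m+1)·b_m` for all `m ≥ 0`. -/
theorem stmt15 (m : ℕ) (b H : ℚ⟦X⟧)
    (hb : b ^ 2 = ratioB) (hb0 : constantCoeff b = 1)
    (hH : H ^ 2 = ratioQ ^ (2 * m + 1)) (hH0 : constantCoeff H = 1) :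
    coeff (2 * m) H = (2 * m + 1 : ℚ) * coeff m b := by
  have hQ := ratioQ_eq_expand_logQuotInv
  obtain ⟨G, rfl⟩ : ∃ G, expand 2 two_ne_zero G = H := by
    refine exists_expand_two_eq_of_rescale_neg_one_eq
      (eq_of_sq_eq_sq_of_constantCoeff_eq_one ?_ ?_ hH0)
    · rw [← map_pow, hH, map_pow, hQ, rescale_neg_one_expand_two]
    · rw [← coeff_zero_eq_constantCoeff_apply, coeff_rescale, pow_zero, one_mul,
        coeff_zero_eq_constantCoeff_apply, hH0]
  have hG : G ^ 2 = logQuotInv ^ (2 * m + 1) :=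
    expand_injective 2 two_ne_zero (by rw [map_pow, hH, hQ, map_pow])
  have hPQ (k : ℕ) : (logQuotInv * logQuot) ^ k = 1 := by rw [logQuotInv_mul_logQuot, one_pow]
  have hbG : b = (G * logQuot ^ m).subst oneSubExpNeg := by
    refine eq_of_sq_eq_sq_of_constantCoeff_eq_one ?_ hb0 ?_
    · rw [hb, ← subst_pow hasSubst_oneSubExpNeg, ← subst_oneSubExpNeg_logQuotInv]
      congr 1
      linear_combination -logQuot ^ (2 * m) * hG - logQuotInv * hPQ (2 * m)
    · simpa [constantCoeff_subst_oneSubExpNeg, constantCoeff_logQuot] using hH0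
  rw [coeff_expand_mul, coeff_eq_of_sq_eq_logQuotInv_pow hG, hbG, coeff_subst_oneSubExpNeg]
  congr 2
  linear_combination -(G * logQuotInv * mk 1) * hPQ m
end
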